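/- Under the hypotheses of the matrix Riccati lemma (B invertible, A ≠ 0, (2√(‖A‖‖D‖)+‖C‖)‖B^{-1}‖ < 1), the map F(X) = -B^{-1}XAX - B^{-1}XC - B^{-1}D is a strict contraction on every closed ball B_λ = {X : ‖X‖ ≤ λ} with λ < (1-‖C‖‖B^{-1}‖)/(2‖A‖‖B^{-1}‖), with Lipschitz constant 2λ‖A‖‖B^{-1}‖ + ‖C‖‖B^{-1}‖ < 1. -/

import Mathlib

open Matrix
open scoped Matrix.Norms.L2Operator

/-!
With `M = B⁻¹`, the difference `F X - F Y` factors through `X - Y`: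
`F X - F Y = -M X A (X - Y) - M (X - Y) A Y - M (X - Y) C`.
Submultiplicativity of the operator norm bounds it by `‖M‖ (‖X‖‖A‖ + ‖A‖‖Y‖ + ‖C‖) ‖X - Y‖`,
which on `B_λ` is at most `(2λ‖A‖ + ‖C‖) ‖M‖ ‖X - Y‖`; the bound on `λ` says exactly that this
Lipschitz constant is below `1`.
-/

section NormedRing

variable {R : Type*} [NormedRing R]

def riccatiMap (M A C D X : R) : R := -(M * X * A * X) - M * X * C - M * D

theorem riccatiMap_sub_riccatiMap (M A C D X Y : R) :
    riccatiMap M A C D X - riccatiMap M A C D Y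
      = -(M * X * A * (X - Y)) - M * (X - Y) * A * Y - M * (X - Y) * C := by
  unfold riccatiMap
  noncomm_ring

theorem norm_mul₄_le (a b c d : R) : ‖a * b * c * d‖ ≤ ‖a‖ * ‖b‖ * ‖c‖ * ‖d‖ :=
  (norm_mul_le _ _).trans (by gcongr; exact norm_mul₃_le)

theorem norm_riccatiMap_sub_le (M A C D X Y : R) :
    ‖riccatiMap M A C D X - riccatiMap M A C D Y‖
      ≤ ‖M‖ * (‖X‖ * ‖A‖ + ‖A‖ * ‖Y‖ + ‖C‖) * ‖X - Y‖ := by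
  rw [riccatiMap_sub_riccatiMap]
  calc _ ≤ ‖M * X * A * (X - Y)‖ + ‖M * (X - Y) * A * Y‖ + ‖M * (X - Y) * C‖ := by
        refine (norm_sub_le _ _).trans (add_le_add_left ((norm_sub_le _ _).trans ?_) _)
        rw [norm_neg]
    _ ≤ ‖M‖ * ‖X‖ * ‖A‖ * ‖X - Y‖ + ‖M‖ * ‖X - Y‖ * ‖A‖ * ‖Y‖ + ‖M‖ * ‖X - Y‖ * ‖C‖ := by
        gcongr
        · exact norm_mul₄_le _ _ _ _
        · exact norm_mul₄_le _ _ _ _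
        · exact norm_mul₃_le
    _ = _ := by ring

theorem norm_riccatiMap_sub_le_of_norm_le (M A C D : R) {X Y : R} {lam : ℝ}
    (hX : ‖X‖ ≤ lam) (hY : ‖Y‖ ≤ lam) :
    ‖riccatiMap M A C D X - riccatiMap M A C D Y‖
      ≤ (2 * lam * ‖A‖ * ‖M‖ + ‖C‖ * ‖M‖) * ‖X - Y‖ :=
  calc _ ≤ ‖M‖ * (‖X‖ * ‖A‖ + ‖A‖ * ‖Y‖ + ‖C‖) * ‖X - Y‖ := norm_riccatiMap_sub_le M A C D X Y
    _ ≤ ‖M‖ * (lam * ‖A‖ + ‖A‖ * lam + ‖C‖) * ‖X - Y‖ := by gcongr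
    _ = _ := by ring

end NormedRing

theorem mul_lt_of_lt_div_of_nonneg {a b c : ℝ} (ha : 0 ≤ a) (hc : 0 ≤ c) (h : a < b / c) :
    a * c < b := by
  rcases hc.eq_or_lt with rfl | hc
  · rw [div_zero] at h
    linarith
  · exact (lt_div_iff₀ hc).mp h

theorem stmt8_general {m : ℕ} (A B C D : Matrix (Fin m) (Fin m) ℂ)
    (lam : ℝ) (hlam0 : 0 ≤ lam)
    (hlam : lam < (1 - ‖C‖ * ‖B⁻¹‖) / (2 * ‖A‖ * ‖B⁻¹‖)) :
    (∀ X Y : Matrix (Fin m) (Fin m) ℂ, ‖X‖ ≤ lam → ‖Y‖ ≤ lam →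
      ‖(-(B⁻¹ * X * A * X) - B⁻¹ * X * C - B⁻¹ * D)
          - (-(B⁻¹ * Y * A * Y) - B⁻¹ * Y * C - B⁻¹ * D)‖
        ≤ (2 * lam * ‖A‖ * ‖B⁻¹‖ + ‖C‖ * ‖B⁻¹‖) * ‖X - Y‖) ∧
    2 * lam * ‖A‖ * ‖B⁻¹‖ + ‖C‖ * ‖B⁻¹‖ < 1 := by
  refine ⟨fun X Y hX hY => norm_riccatiMap_sub_le_of_norm_le B⁻¹ A C D hX hY, ?_⟩
  have := mul_lt_of_lt_div_of_nonneg hlam0 (by positivity) hlam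
  linarith

/-- Under the Riccati lemma hypotheses, `F(X) = -B⁻¹XAX - B⁻¹XC - B⁻¹D` is a
strict contraction on every closed ball of radius `λ < (1-‖C‖‖B⁻¹‖)/(2‖A‖‖B⁻¹‖)`, with
Lipschitz constant `2λ‖A‖‖B⁻¹‖ + ‖C‖‖B⁻¹‖ < 1`. -/
theorem stmt8 {m : ℕ} (A B C D : Matrix (Fin m) (Fin m) ℂ) (hA : A ≠ 0) (hB : IsUnit B)
    (h : (2 * Real.sqrt (‖A‖ * ‖D‖) + ‖C‖) * ‖B⁻¹‖ < 1)
    (lam : ℝ) (hlam0 : 0 ≤ lam)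
    (hlam : lam < (1 - ‖C‖ * ‖B⁻¹‖) / (2 * ‖A‖ * ‖B⁻¹‖)) :
    (∀ X Y : Matrix (Fin m) (Fin m) ℂ, ‖X‖ ≤ lam → ‖Y‖ ≤ lam →
      ‖(-(B⁻¹ * X * A * X) - B⁻¹ * X * C - B⁻¹ * D)
          - (-(B⁻¹ * Y * A * Y) - B⁻¹ * Y * C - B⁻¹ * D)‖
        ≤ (2 * lam * ‖A‖ * ‖B⁻¹‖ + ‖C‖ * ‖B⁻¹‖) * ‖X - Y‖) ∧
    2 * lam * ‖A‖ * ‖B⁻¹‖ + ‖C‖ * ‖B⁻¹‖ < 1 :=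
  stmt8_general A B C D lam hlam0 hlam
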